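/- Let F be a finite set of monomials of the same degree d ≥ 2 in k[x_1,...,x_n]. If the log-matrix A has rank n and the linear syzygy matrix LS(F) has rank q - 1, then k[F] ⊆ k[x_d] is a birational extension. -/

import Mathlib

open MvPolynomial

/-- The fraction field (inside `Frac(k[x])`) of the subalgebra generated by a set of
polynomials. -/
noncomputable def fractionFieldOf (n : ℕ) (k : Type*) [Field k]
    (S : Set (MvPolynomial (Fin n) k)) :
    Subfield (FractionRing (MvPolynomial (Fin n) k)) :=
  Subfield.closure
    ((algebraMap (MvPolynomial (Fin n) k) (FractionRing (MvPolynomial (Fin n) k))) ''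
      (Algebra.adjoin k S : Set (MvPolynomial (Fin n) k)))

/-!
The columns of `LS(F)` are the edges of a graph on the monomials of `F`. If this graph had a
component `S` other than everything, the vectors `(x^{v_j})_{j ∈ S}` and `(x^{v_j})_{j ∉ S}`
would be two independent vectors in the left kernel of `LS(F)`, so `rank LS(F) ≤ q - 2`.

A column for `x_i x^{v_j} = x_k x^{v_l}` also joins the variables `x_i` and `x_k`. On a component
`S` of this variable graph the `S`-degree of `x^{v_j}` is constant along monomial edges, hence
equal to one `c` for all `j`, so `d • 1_S - c • 1` is orthogonal to every column of the
log-matrix `A`. As `rank A = n` it vanishes, which for `d ≠ 0` forces `S` to be everything.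

So every ratio `x_i / x_k` lies in `k(F)`, and a monomial of degree `d` is `x^{v_1}` times a
product of such ratios.
-/

open Matrix

theorem Matrix.rank_add_rank_le_card_of_mul_eq_zero_of_isDomain {R l m n : Type*} [CommRing R]
    [IsDomain R] [Fintype m] [Fintype n] {A : Matrix l m R} {B : Matrix m n R}
    (hAB : A * B = 0) : A.rank + B.rank ≤ Fintype.card m := by
  have hle : LinearMap.range B.mulVecLin ≤ LinearMap.ker A.mulVecLin := by
    rw [LinearMap.range_le_ker_iff, ← Matrix.mulVecLin_mul, hAB, Matrix.mulVecLin_zero]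
  have hB : B.rank ≤ Module.finrank R (LinearMap.ker A.mulVecLin) :=
    Cardinal.toNat_le_toNat (Submodule.rank_mono hle) ((Submodule.rank_le _).trans_lt (by simp))
  have hA : A.rank + Module.finrank R (LinearMap.ker A.mulVecLin) = Fintype.card m := by
    rw [Matrix.rank, ← A.mulVecLin.quotKerEquivRange.finrank_eq,
      Submodule.finrank_quotient_add_finrank, Module.finrank_fintype_fun_eq_card]
  omega

theorem Matrix.vecMul_injective_of_rank_eq_card {K m n : Type*} [Field K] [Fintype m]
    [Fintype n] {A : Matrix m n K} (hA : A.rank = Fintype.card m) :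
    Function.Injective A.vecMul := by
  rw [vecMul_injective_iff, linearIndependent_iff_card_eq_finrank_span, Set.finrank,
    ← rank_eq_finrank_span_row, hA]

namespace Relation.EqvGen

variable {α : Type*} {r : α → α → Prop}

theorem iff_of_rel (x : α) {a b : α} (h : r a b) : EqvGen r x a ↔ EqvGen r x b :=
  ⟨fun hx => hx.trans _ _ _ (.rel _ _ h), fun hx => hx.trans _ _ _ (.symm _ _ (.rel _ _ h))⟩

theorem apply_eq_apply {β : Type*} {f : α → β} (hf : ∀ a b, r a b → f a = f b) {a b : α}
    (h : EqvGen r a b) : f a = f b :=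
  congrArg (Quot.lift f hf) (Quot.eqvGen_sound h)

theorem div_mem {K : Type*} [Field K] {E : Subfield K} {g : α → K} (hg : ∀ a, g a ≠ 0)
    (hr : ∀ a b, r a b → g a / g b ∈ E) {a b : α} (h : EqvGen r a b) : g a / g b ∈ E := by
  induction h with
  | rel _ _ hab => exact hr _ _ hab
  | refl a => rw [div_self (hg a)]; exact E.one_mem
  | symm a b _ ih => rw [← inv_div]; exact E.inv_mem ih
  | trans a b c _ _ ih₁ ih₂ =>
    rw [← div_mul_div_cancel₀ (hg b)]
    exact E.mul_mem ih₁ ih₂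

end Relation.EqvGen

section MonomialRatios

variable {σ k K : Type*} [Fintype σ] [CommSemiring k] [Field K]
  (f : MvPolynomial σ k →+* K)

theorem map_monomial_one_eq_pow_mul_prod {i₀ : σ} (hi₀ : f (X i₀) ≠ 0) (w : σ →₀ ℕ) :
    f (monomial w 1) = f (X i₀) ^ (∑ i, w i) * ∏ i, (f (X i) / f (X i₀)) ^ w i := by
  rw [Finset.prod_congr rfl fun i _ => div_pow _ _ _, Finset.prod_div_distrib,
    Finset.prod_pow_eq_pow_sum, mul_div_cancel₀ _ (pow_ne_zero _ hi₀), monomial_eq, C_1,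
    one_mul, Finsupp.prod_fintype _ _ (by simp), map_prod]
  simp only [map_pow]

theorem map_monomial_one_mem_of_div_mem (hf : ∀ i, f (X i) ≠ 0) {E : Subfield K}
    (hE : ∀ i i', f (X i) / f (X i') ∈ E) {u w : σ →₀ ℕ} (hu : f (monomial u 1) ∈ E)
    (huw : ∑ i, u i = ∑ i, w i) : f (monomial w 1) ∈ E := by
  rcases isEmpty_or_nonempty σ with _ | ⟨⟨i₀⟩⟩
  · rwa [Subsingleton.elim w u]
  set ratio : (σ →₀ ℕ) → K := fun e => ∏ i, (f (X i) / f (X i₀)) ^ e i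
  have hratio : ∀ e, ratio e ∈ E := fun e => prod_mem fun i _ => pow_mem (hE i i₀) _
  have hne : ratio u ≠ 0 :=
    Finset.prod_ne_zero_iff.2 fun i _ => pow_ne_zero _ (div_ne_zero (hf i) (hf i₀))
  have hw : f (monomial w 1) = f (monomial u 1) * ratio w / ratio u := by
    rw [eq_div_iff hne, map_monomial_one_eq_pow_mul_prod f (hf i₀) w,
      map_monomial_one_eq_pow_mul_prod f (hf i₀) u, huw]
    ring
  rw [hw]
  exact div_mem (mul_mem hu (hratio w)) (hratio u)

end MonomialRatios

section FractionFieldOf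

variable {n : ℕ} {k : Type*} [Field k]

theorem fractionFieldOf_mono {S T : Set (MvPolynomial (Fin n) k)} (h : S ⊆ T) :
    fractionFieldOf n k S ≤ fractionFieldOf n k T :=
  Subfield.closure_mono (Set.image_mono (Algebra.adjoin_mono h))

theorem algebraMap_mem_fractionFieldOf {S : Set (MvPolynomial (Fin n) k)}
    {p : MvPolynomial (Fin n) k} (hp : p ∈ Algebra.adjoin k S) :
    algebraMap _ (FractionRing (MvPolynomial (Fin n) k)) p ∈ fractionFieldOf n k S :=
  Subfield.subset_closure (Set.mem_image_of_mem _ hp)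

theorem fractionFieldOf_le_fractionFieldOf {S T : Set (MvPolynomial (Fin n) k)}
    (h : ∀ p ∈ T,
      algebraMap _ (FractionRing (MvPolynomial (Fin n) k)) p ∈ fractionFieldOf n k S) :
    fractionFieldOf n k T ≤ fractionFieldOf n k S := by
  refine Subfield.closure_le.2 ?_
  rintro _ ⟨p, hp, rfl⟩
  induction hp using Algebra.adjoin_induction with
  | mem p hp => exact h p hp
  | algebraMap r => exact algebraMap_mem_fractionFieldOf (Subalgebra.algebraMap_mem _ r)
  | add p p' _ _ hp hp' => rw [map_add]; exact add_mem hp hp'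
  | mul p p' _ _ hp hp' => rw [map_mul]; exact mul_mem hp hp'

end FractionFieldOf

section LinearSyzygies

variable {σ ι : Type*} (v : ι → σ →₀ ℕ)

def MonomialAdj (j l : ι) : Prop :=
  ∃ i k : σ, Finsupp.single i 1 + v j = Finsupp.single k 1 + v l

def VariableAdj (i k : σ) : Prop :=
  ∃ j l : ι, Finsupp.single i 1 + v j = Finsupp.single k 1 + v l

abbrev LinearRelation : Type _ :=
  {t : (σ × σ) × (ι × ι) //
    Finsupp.single t.1.1 1 + v t.2.1 = Finsupp.single t.1.2 1 + v t.2.2}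

noncomputable def linearSyzygyMatrix (k : Type*) [CommRing k] [DecidableEq ι] :
    Matrix ι (LinearRelation v) (MvPolynomial σ k) :=
  Matrix.of fun j t =>
    (if j = t.1.2.1 then X t.1.1.1 else 0) - (if j = t.1.2.2 then X t.1.1.2 else 0)

def logMatrix : Matrix σ ι ℚ := Matrix.of fun i j => (v j i : ℚ)

variable {v}

theorem monomial_mul_X_eq_of_add_eq {k : Type*} [CommSemiring k] {i i' : σ} {j l : ι}
    (h : Finsupp.single i 1 + v j = Finsupp.single i' 1 + v l) :
    monomial (v j) (1 : k) * X i = monomial (v l) 1 * X i' := by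
  rw [X, X, monomial_mul, monomial_mul, add_comm, h, add_comm]

theorem vecMul_linearSyzygyMatrix_apply {k : Type*} [CommRing k] [Fintype ι] [DecidableEq ι]
    (u : ι → MvPolynomial σ k) (t : LinearRelation v) :
    (u ᵥ* linearSyzygyMatrix v k) t = u t.1.2.1 * X t.1.1.1 - u t.1.2.2 * X t.1.1.2 := by
  simp [Matrix.vecMul, dotProduct, linearSyzygyMatrix, mul_sub, Finset.sum_sub_distrib]

theorem indicator_vecMul_linearSyzygyMatrix {k : Type*} [CommRing k] [Fintype ι]
    [DecidableEq ι] {S : Set ι} (hS : ∀ j l, MonomialAdj v j l → (j ∈ S ↔ l ∈ S)) :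
    S.indicator (fun j => monomial (v j) (1 : k)) ᵥ* linearSyzygyMatrix v k = 0 := by
  ext ⟨⟨⟨i, i'⟩, ⟨j, l⟩⟩, h⟩
  rw [vecMul_linearSyzygyMatrix_apply, Pi.zero_apply]
  by_cases hj : j ∈ S
  · simp [hj, (hS j l ⟨i, i', h⟩).1 hj, monomial_mul_X_eq_of_add_eq h]
  · simp [hj, mt (hS j l ⟨i, i', h⟩).2 hj]

theorem eqvGen_monomialAdj_of_rank_linearSyzygyMatrix {k : Type*} [CommRing k] [IsDomain k]
    [Fintype ι] [DecidableEq ι] [Fintype (LinearRelation v)]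
    (hrank : (linearSyzygyMatrix v k).rank = Fintype.card ι - 1) (j₀ j₁ : ι) :
    Relation.EqvGen (MonomialAdj v) j₀ j₁ := by
  by_contra hj₁
  set S : Set ι := {j | Relation.EqvGen (MonomialAdj v) j₀ j}
  have hS : ∀ j l, MonomialAdj v j l → (j ∈ S ↔ l ∈ S) := fun _ _ =>
    Relation.EqvGen.iff_of_rel j₀
  let u : ι → MvPolynomial σ k := fun j => monomial (v j) 1
  let U : Matrix (Fin 2) ι (MvPolynomial σ k) := Matrix.of ![S.indicator u, Sᶜ.indicator u]
  have hU : U * linearSyzygyMatrix v k = 0 := by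
    refine Matrix.ext fun r t => ?_
    fin_cases r
    · exact congrFun (indicator_vecMul_linearSyzygyMatrix hS) t
    · exact congrFun (indicator_vecMul_linearSyzygyMatrix (S := Sᶜ)
        fun j l hjl => not_congr (hS j l hjl)) t
  have hsub : U.submatrix id ![j₀, j₁] = Matrix.diagonal ![u j₀, u j₁] := by
    ext r c
    fin_cases r <;> fin_cases c <;> simp [U, S, hj₁, Relation.EqvGen.refl]
  have hU2 : 2 ≤ U.rank := by
    have := U.rank_submatrix_le id ![j₀, j₁]
    rwa [hsub, Matrix.rank_of_det_ne_zero (by simp [u]), Fintype.card_fin] at this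
  have := Matrix.rank_add_rank_le_card_of_mul_eq_zero_of_isDomain hU
  omega

theorem vecMul_logMatrix_apply [Fintype σ] (b : σ → ℚ) (j : ι) :
    (b ᵥ* logMatrix v) j = ∑ i, b i * v j i := rfl

theorem add_vecMul_logMatrix_eq_of_add_eq [Fintype σ] (b : σ → ℚ)
    {i i' : σ} {j l : ι} (h : Finsupp.single i 1 + v j = Finsupp.single i' 1 + v l) :
    b i + (b ᵥ* logMatrix v) j = b i' + (b ᵥ* logMatrix v) l := by
  classical
  have := congrArg (fun w : σ →₀ ℕ => ∑ r, b r * w r) h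
  simpa [vecMul_logMatrix_apply, mul_add, Finset.sum_add_distrib, Finsupp.single_apply]
    using this

theorem nonempty_of_rank_logMatrix [Fintype σ] [Fintype ι] [Nonempty σ]
    (hrank : (logMatrix v).rank = Fintype.card σ) : Nonempty ι :=
  Fintype.card_pos_iff.1 <| Fintype.card_pos.trans_le (hrank ▸ (logMatrix v).rank_le_card_width)

theorem eqvGen_variableAdj_of_rank_logMatrix [Fintype σ] [Fintype ι] {d : ℕ} (hd : d ≠ 0)
    (hdeg : ∀ j, ∑ i, v j i = d) (hrank : (logMatrix v).rank = Fintype.card σ)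
    (hconn : ∀ j l, Relation.EqvGen (MonomialAdj v) j l) (i₀ i₁ : σ) :
    Relation.EqvGen (VariableAdj v) i₀ i₁ := by
  classical
  by_contra hi₁
  set S : Set σ := {i | Relation.EqvGen (VariableAdj v) i₀ i}
  let a : σ → ℚ := S.indicator 1
  have hconst : ∀ j l, (a ᵥ* logMatrix v) j = (a ᵥ* logMatrix v) l := by
    refine fun j l => (hconn j l).apply_eq_apply fun j l ⟨i, i', h⟩ => ?_
    have hii' : a i = a i' := by
      simp [a, Set.indicator, S, Relation.EqvGen.iff_of_rel (r := VariableAdj v) i₀ ⟨j, l, h⟩]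
    have := add_vecMul_logMatrix_eq_of_add_eq a h
    rw [hii'] at this
    exact add_left_cancel this
  have hone : ∀ j, ((1 : σ → ℚ) ᵥ* logMatrix v) j = d := fun j => by
    simp [vecMul_logMatrix_apply, ← hdeg j]
  have : Nonempty σ := ⟨i₀⟩
  obtain ⟨j₀⟩ := nonempty_of_rank_logMatrix hrank
  set c := (a ᵥ* logMatrix v) j₀
  have hzero : ((d : ℚ) • a - c • 1) ᵥ* logMatrix v = 0 := by
    ext j
    simp [sub_vecMul, smul_vecMul, hone, hconst j j₀, c, mul_comm]
  have hb := Matrix.vecMul_injective_of_rank_eq_card hrank (hzero.trans (zero_vecMul _).symm)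
  have h₀ := congrFun hb i₀
  have h₁ := congrFun hb i₁
  simp only [a, S] at h₀ h₁
  simp [hi₁, Relation.EqvGen.refl] at h₀ h₁
  rw [h₁, sub_zero, Nat.cast_eq_zero] at h₀
  exact hd h₀

theorem div_mem_of_variableAdj {k K : Type*} [CommSemiring k] [Nontrivial k] [Field K]
    {f : MvPolynomial σ k →+* K} (hf : Function.Injective f) {E : Subfield K}
    (hv : ∀ j, f (monomial (v j) 1) ∈ E) {i i' : σ} (h : VariableAdj v i i') :
    f (X i) / f (X i') ∈ E := by
  obtain ⟨j, l, hjl⟩ := h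
  have hne : ∀ p, p ≠ 0 → f p ≠ 0 := fun p hp => (map_ne_zero_iff f hf).2 hp
  have : f (X i) / f (X i') = f (monomial (v l) 1) / f (monomial (v j) 1) := by
    rw [div_eq_div_iff (hne _ (X_ne_zero _)) (hne _ (by simp)), ← map_mul, ← map_mul, mul_comm,
      monomial_mul_X_eq_of_add_eq hjl, mul_comm]
  rw [this]
  exact div_mem (hv l) (hv j)

end LinearSyzygies

open scoped Classical in
theorem stmt_11_general (n q d : ℕ) (hd : 2 ≤ d) (k : Type*) [Field k]
    (v : Fin q → (Fin n →₀ ℕ))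
    (hdeg : ∀ j, ∑ i, v j i = d)
    (LS : Matrix (Fin q)
      {t : (Fin n × Fin n) × (Fin q × Fin q) //
        Finsupp.single t.1.1 1 + v t.2.1 = Finsupp.single t.1.2 1 + v t.2.2}
      (MvPolynomial (Fin n) k))
    (hLS : ∀ t j, LS j t =
      (if j = t.1.2.1 then X t.1.1.1 else 0) - (if j = t.1.2.2 then X t.1.1.2 else 0))
    (hrankA : (Matrix.of fun (i : Fin n) (j : Fin q) => ((v j) i : ℚ)).rank = n)
    (hrankLS : LS.rank = q - 1) :
    fractionFieldOf n k (Set.range fun j => monomial (v j) (1 : k)) =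
      fractionFieldOf n k
        {p | ∃ w : Fin n →₀ ℕ, (∑ i, w i) = d ∧ p = monomial w (1 : k)} := by
  obtain rfl : LS = linearSyzygyMatrix v k := Matrix.ext fun j t => hLS t j
  replace hrankA : (logMatrix v).rank = Fintype.card (Fin n) := by
    rw [Fintype.card_fin]; exact hrankA
  set f := algebraMap (MvPolynomial (Fin n) k) (FractionRing (MvPolynomial (Fin n) k))
  have hf : Function.Injective f := IsFractionRing.injective _ _
  set E := fractionFieldOf n k (Set.range fun j => monomial (v j) (1 : k))
  have hvE : ∀ j, f (monomial (v j) 1) ∈ E := fun j =>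
    algebraMap_mem_fractionFieldOf (Algebra.subset_adjoin ⟨j, rfl⟩)
  have hconn := eqvGen_variableAdj_of_rank_logMatrix (by omega) hdeg hrankA
    (eqvGen_monomialAdj_of_rank_linearSyzygyMatrix (by simpa using hrankLS))
  have hX : ∀ i, f (X i) ≠ 0 := fun i => (map_ne_zero_iff f hf).2 (X_ne_zero i)
  have hratio : ∀ i i', f (X i) / f (X i') ∈ E := fun i i' =>
    (hconn i i').div_mem hX fun _ _ => div_mem_of_variableAdj hf hvE
  refine le_antisymm (fractionFieldOf_mono ?_) (fractionFieldOf_le_fractionFieldOf ?_)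
  · rintro _ ⟨j, rfl⟩
    exact ⟨v j, hdeg j, rfl⟩
  · rintro _ ⟨w, hw, rfl⟩
    obtain ⟨i, -, -⟩ := Finset.exists_ne_zero_of_sum_ne_zero (hw.trans_ne (by omega))
    have : Nonempty (Fin n) := ⟨i⟩
    obtain ⟨j⟩ := nonempty_of_rank_logMatrix hrankA
    exact map_monomial_one_mem_of_div_mem f hX hratio (hvE j) (by rw [hdeg, hw])

open scoped Classical in
/-- Let `F = {x^{v_1},…,x^{v_q}}` be monomials of the same degree `d ≥ 2`.  If the
log-matrix `A` has rank `n` and the linear syzygy matrix `LS(F)` (with one column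
`x_i e_j - x_k e_ℓ` for each relation `x_i x^{v_j} = x_k x^{v_ℓ}`) has rank `q - 1`,
then `k[F] ⊆ k[x_d]` is a birational extension. -/
theorem stmt_11 (n q d : ℕ) (hd : 2 ≤ d) (k : Type*) [Field k]
    (v : Fin q → (Fin n →₀ ℕ)) (hv : Function.Injective v)
    (hdeg : ∀ j, ∑ i, v j i = d)
    (LS : Matrix (Fin q)
      {t : (Fin n × Fin n) × (Fin q × Fin q) //
        Finsupp.single t.1.1 1 + v t.2.1 = Finsupp.single t.1.2 1 + v t.2.2}
      (MvPolynomial (Fin n) k))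
    (hLS : ∀ t j, LS j t =
      (if j = t.1.2.1 then X t.1.1.1 else 0) - (if j = t.1.2.2 then X t.1.1.2 else 0))
    (hrankA : (Matrix.of fun (i : Fin n) (j : Fin q) => ((v j) i : ℚ)).rank = n)
    (hrankLS : LS.rank = q - 1) :
    fractionFieldOf n k (Set.range fun j => monomial (v j) (1 : k)) =
      fractionFieldOf n k
        {p | ∃ w : Fin n →₀ ℕ, (∑ i, w i) = d ∧ p = monomial w (1 : k)} :=
  stmt_11_general n q d hd k v hdeg LS hLS hrankA hrankLS
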